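/- arXiv:2304.05790 — 2 statements merged into one kernel-verified Lean document; each statement's English description precedes it below -/
import Mathlib

section
/- Lemma 2.5 (clipping the output of an approximating DNN into a hypercube): Let p ∈ [1,∞], m, n ∈ ℕ, D ⊆ ℝ^m, f ∈ C(D,ℝ^n), and L, ε ∈ [0,∞) satisfy Cost_p(f,L,ε) < ∞, let Q ⊆ ℝ^n be an n-dimensional hypercube, and assume f(D) ⊆ Q. Then there exists a DNN Φ which satisfies R(Φ) ∈ C(ℝ^m,ℝ^n), R(Φ)(x) ∈ Q for all x ∈ D, ‖R(Φ)(x) − f(x)‖_p ≤ ε for all x ∈ D, ‖R(Φ)(x) − R(Φ)(y)‖_p ≤ L‖x−y‖_p for all x,y ∈ D, and P(Φ) ≤ Cost_p(f,L,ε) + 2n(n+1). -/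
open scoped BigOperators ENNReal

noncomputable section

/-- A ReLU deep neural network with `L + 1` affine layers (so depth at least one),
layer dimensions `ℓ 0, ℓ 1, …, ℓ (L + 1)`, weight matrices `W k` and bias vectors `b k`
(values of `ℓ`, `W`, `b` beyond layer index `L` are irrelevant for the realization
and for the number of parameters). -/
structure DNN where
  L : ℕ
  ℓ : ℕ → ℕ
  W : (k : ℕ) → Matrix (Fin (ℓ (k + 1))) (Fin (ℓ k)) ℝ
  b : (k : ℕ) → Fin (ℓ (k + 1)) → ℝ

namespace DNN

/-- The number of parameters `P(Φ) = ∑_{k=1}^{L} ℓ_k (ℓ_{k-1} + 1)` of a DNN. -/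
def params (Φ : DNN) : ℕ :=
  ∑ k ∈ Finset.range (Φ.L + 1), Φ.ℓ (k + 1) * (Φ.ℓ k + 1)

/-- The `k`-th affine layer function `x ↦ W_k x + b_k`. -/
def affine (Φ : DNN) (k : ℕ) (x : Fin (Φ.ℓ k) → ℝ) : Fin (Φ.ℓ (k + 1)) → ℝ :=
  fun i => (∑ j, Φ.W k i j * x j) + Φ.b k i

/-- The value after `k` affine layers, each followed by the ReLU activation. -/
def hidden (Φ : DNN) : (k : ℕ) → (Fin (Φ.ℓ 0) → ℝ) → (Fin (Φ.ℓ k) → ℝ)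
  | 0 => id
  | k + 1 => fun x i => max (affine Φ k (hidden Φ k x) i) 0

/-- The realization `R(Φ)`: all affine layers with ReLU in between (no activation after
the last affine layer). -/
def realize (Φ : DNN) (x : Fin (Φ.ℓ 0) → ℝ) : Fin (Φ.ℓ (Φ.L + 1)) → ℝ :=
  affine Φ Φ.L (hidden Φ Φ.L x)

/-- `Φ.Realizes f` means that the realization of `Φ` is the function `f : ℝ^m → ℝ^n`
(in particular the input and output dimensions of `Φ` are `m` and `n`). -/
def Realizes (Φ : DNN) {m n : ℕ} (f : (Fin m → ℝ) → (Fin n → ℝ)) : Prop :=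
  ∃ (hm : Φ.ℓ 0 = m) (hn : Φ.ℓ (Φ.L + 1) = n),
    ∀ (x : Fin m → ℝ) (i : Fin n),
      f x i = realize Φ (fun j => x (Fin.cast hm j)) (Fin.cast hn.symm i)

end DNN

/-- The `ℓ^p`-norm on `ℝ^k` for `p ∈ [1,∞]`. -/
def lpNorm (p : ℝ≥0∞) {k : ℕ} (x : Fin k → ℝ) : ℝ :=
  if p = ∞ then ⨆ i, |x i| else (∑ i, |x i| ^ p.toReal) ^ (1 / p.toReal)

/-- The hypercube `[a,b]^d ⊆ ℝ^d`. -/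
def cube (d : ℕ) (a b : ℝ) : Set (Fin d → ℝ) :=
  Set.Icc (fun _ => a) (fun _ => b)

/-- `Cost p D f L ε`: the minimal number of parameters of a DNN whose realization
approximates `f` on `D` up to `ε` in the `ℓ^p`-norm and is `L`-Lipschitz on `D`
with respect to the `ℓ^p`-norm; `∞` if no such DNN exists. -/
def Cost (p : ℝ≥0∞) {m n : ℕ} (D : Set (Fin m → ℝ))
    (f : (Fin m → ℝ) → (Fin n → ℝ)) (L ε : ℝ) : ℝ≥0∞ :=
  sInf { N : ℝ≥0∞ | ∃ Φ : DNN, ∃ g : (Fin m → ℝ) → (Fin n → ℝ),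
    Φ.Realizes g ∧ N = (Φ.params : ℝ≥0∞) ∧
    (∀ x ∈ D, lpNorm p (g x - f x) ≤ ε) ∧
    (∀ x ∈ D, ∀ y ∈ D, lpNorm p (g x - g y) ≤ L * lpNorm p (x - y)) }

/-- Given block sizes `d : Fin n → ℕ`, the index in `Fin (∑ j, d j)` of the `l`-th
coordinate of the `i`-th block (blocks are arranged consecutively). -/
def blockIdx {n : ℕ} (d : Fin n → ℕ) (i : Fin n) (l : Fin (d i)) : Fin (∑ j, d j) :=
  ⟨(∑ j ∈ Finset.univ.filter (fun j => j < i), d j) + l.1, by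
    have h1 : l.1 < d i := l.2
    have h2 : (∑ j ∈ Finset.univ.filter (fun j => j < i), d j) + d i ≤ ∑ j, d j := by
      have hsplit := Finset.sum_filter_add_sum_filter_not Finset.univ (fun j => j < i) d
      have h3 : d i ≤ ∑ j ∈ Finset.univ.filter (fun j => ¬ j < i), d j :=
        Finset.single_le_sum (fun _ _ => Nat.zero_le _) (by simp)
      omega
    omega⟩

/-- The class `𝒫_{k,p}([a,b]^d, L)`: parallelizations `f = f_1 □ ⋯ □ f_m` of real-valued
functions `f_i` of at most `k` variables that are `L`-Lipschitz w.r.t. the `ℓ^p`-norm. -/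
def MemPLip (k : ℕ) (p : ℝ≥0∞) (a b L : ℝ) {d m : ℕ}
    (f : (Fin d → ℝ) → (Fin m → ℝ)) : Prop :=
  ∃ (dims : Fin m → ℕ) (hd : ∑ i, dims i = d) (g : ∀ i, (Fin (dims i) → ℝ) → ℝ),
    (∀ i, 0 < dims i) ∧ (∀ i, dims i ≤ k) ∧
    (∀ i, ∀ x ∈ cube (dims i) a b, ∀ y ∈ cube (dims i) a b,
      |g i x - g i y| ≤ L * lpNorm p (x - y)) ∧
    (∀ x ∈ cube d a b, ∀ i : Fin m,
      f x i = g i (fun l => x (Fin.cast hd (blockIdx dims i l))))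

/-- The class `M([a,b]^d)`: parallelizations of maximum functions `m_{d_1} □ ⋯ □ m_{d_m}`. -/
def MemMaxClass (a b : ℝ) {d m : ℕ} (f : (Fin d → ℝ) → (Fin m → ℝ)) : Prop :=
  ∃ (dims : Fin m → ℕ) (hd : ∑ i, dims i = d),
    (∀ i, 0 < dims i) ∧
    (∀ x ∈ cube d a b, ∀ i : Fin m,
      f x i = ⨆ l : Fin (dims i), x (Fin.cast hd (blockIdx dims i l)))

/-- The class `P([a,b]^d)`: parallelizations of product functions `p_{d_1} □ ⋯ □ p_{d_m}`. -/
def MemProdClass (a b : ℝ) {d m : ℕ} (f : (Fin d → ℝ) → (Fin m → ℝ)) : Prop :=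
  ∃ (dims : Fin m → ℕ) (hd : ∑ i, dims i = d),
    (∀ i, 0 < dims i) ∧
    (∀ x ∈ cube d a b, ∀ i : Fin m,
      f x i = ∏ l : Fin (dims i), x (Fin.cast hd (blockIdx dims i l)))

/-- `f` coincides on `[a,b]^d` with the extended maximum function
`𝔪_d(x) = (max{x_1}, max{x_1,x_2}, …, max{x_1,…,x_d})`. -/
def IsExtMaxOn (a b : ℝ) {d m : ℕ} (f : (Fin d → ℝ) → (Fin m → ℝ)) : Prop :=
  ∃ h : d = m, ∀ x ∈ cube d a b, ∀ i : Fin m,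
    f x i = (Finset.Iic (Fin.cast h.symm i)).sup' Finset.nonempty_Iic x

/-- `f` coincides on `[a,b]^d` with the extended product function
`𝔭_d(x) = (x_1, x_1 x_2, …, x_1 ⋯ x_d)`. -/
def IsExtProdOn (a b : ℝ) {d m : ℕ} (f : (Fin d → ℝ) → (Fin m → ℝ)) : Prop :=
  ∃ h : d = m, ∀ x ∈ cube d a b, ∀ i : Fin m,
    f x i = ∏ j ∈ Finset.Iic (Fin.cast h.symm i), x j

/-- Iterated composition: `compSeq dims f k = f_{k-1} ∘ ⋯ ∘ f_1 ∘ f_0`. -/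
def compSeq (dims : ℕ → ℕ) (f : ∀ i : ℕ, (Fin (dims i) → ℝ) → (Fin (dims (i + 1)) → ℝ)) :
    (k : ℕ) → (Fin (dims 0) → ℝ) → (Fin (dims k) → ℝ)
  | 0 => id
  | k + 1 => fun x => f k (compSeq dims f k x)


/-! The clipping `t ↦ min (max t A) B` equals `B - ReLU((B - A) - ReLU(t - A))`, so it is realized
by appending two ReLU layers of width `n` to a network attaining `Cost p D f L ε`, the shift by `-A`
being absorbed into the last bias of that network; this costs `2n(n+1)` parameters. Clipping is
`1`-Lipschitz in each coordinate and fixes the values of `f` on `D`, so by monotonicity of the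
`ℓ^p`-norm the approximation and Lipschitz bounds survive. -/

open scoped Matrix

theorem ENNReal.sInf_mem_of_subset_range_natCast {S : Set ℝ≥0∞}
    (hS : S ⊆ Set.range ((↑) : ℕ → ℝ≥0∞)) (hne : S.Nonempty) : sInf S ∈ S := by
  obtain ⟨k, hk, hmin⟩ : ∃ k : ℕ, (k : ℝ≥0∞) ∈ S ∧ ∀ s ∈ S, (k : ℝ≥0∞) ≤ s := by
    have hT : {k : ℕ | (k : ℝ≥0∞) ∈ S}.Nonempty := by
      obtain ⟨s, hs⟩ := hne
      obtain ⟨k, rfl⟩ := hS hs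
      exact ⟨k, hs⟩
    refine ⟨sInf {k : ℕ | (k : ℝ≥0∞) ∈ S}, Nat.sInf_mem hT, fun s hs => ?_⟩
    obtain ⟨k, rfl⟩ := hS hs
    exact Nat.cast_le.mpr (Nat.sInf_le hs)
  rwa [le_antisymm (sInf_le hk) (le_sInf hmin)]

theorem exists_realizes_params_eq_cost {p : ℝ≥0∞} {m n : ℕ} {D : Set (Fin m → ℝ)}
    {f : (Fin m → ℝ) → (Fin n → ℝ)} {L ε : ℝ} (hfin : Cost p D f L ε ≠ ⊤) :
    ∃ (Φ : DNN) (g : (Fin m → ℝ) → (Fin n → ℝ)),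
      Φ.Realizes g ∧ Cost p D f L ε = Φ.params ∧
      (∀ x ∈ D, lpNorm p (g x - f x) ≤ ε) ∧
      (∀ x ∈ D, ∀ y ∈ D, lpNorm p (g x - g y) ≤ L * lpNorm p (x - y)) := by
  refine (ENNReal.sInf_mem_of_subset_range_natCast ?_ ?_ : Cost p D f L ε ∈ _)
  · rintro _ ⟨Φ, -, -, rfl, -⟩
    exact ⟨_, rfl⟩
  · rw [Set.nonempty_iff_ne_empty]
    rintro hempty
    exact hfin (by rw [Cost, hempty, sInf_empty])

theorem lpNorm_mono (p : ℝ≥0∞) {k : ℕ} {u v : Fin k → ℝ} (h : ∀ i, |u i| ≤ |v i|) :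
    lpNorm p u ≤ lpNorm p v := by
  unfold lpNorm
  split_ifs
  · rcases isEmpty_or_nonempty (Fin k) with hk | hk
    · simp [Real.iSup_of_isEmpty]
    · exact ciSup_mono (Set.finite_range _).bddAbove h
  · gcongr (∑ i, ?_ ^ _) ^ _ with i
    exact h i

theorem abs_min_max_sub_min_max_le (A B s t : ℝ) :
    |min (max s A) B - min (max t A) B| ≤ |s - t| :=
  (abs_min_sub_min_le_max _ _ _ _).trans
    (max_le (abs_max_sub_max_le_abs s t A) (by simp))

theorem min_max_eq_sub_max_sub_max_sub {A B : ℝ} (hAB : A ≤ B) (t : ℝ) :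
    min (max t A) B = B - max ((B - A) - max (t - A) 0) 0 := by
  rcases le_total t A with htA | hAt
  · rw [max_eq_right htA, min_eq_left hAB, max_eq_right (by linarith : t - A ≤ 0),
      max_eq_left (by linarith : (0 : ℝ) ≤ B - A - 0)]
    ring
  rcases le_total t B with htB | hBt
  · rw [max_eq_left hAt, min_eq_left htB, max_eq_left (by linarith : (0 : ℝ) ≤ t - A),
      max_eq_left (by linarith : (0 : ℝ) ≤ B - A - (t - A))]
    ring
  · rw [max_eq_left hAt, min_eq_right hBt, max_eq_left (by linarith : (0 : ℝ) ≤ t - A),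
      max_eq_right (by linarith : B - A - (t - A) ≤ 0)]
    ring

namespace DNN

def addOutputConst (Φ : DNN) (c : ℝ) : DNN :=
  { Φ with b := fun k i => Φ.b k i + if k = Φ.L then c else 0 }

theorem params_addOutputConst (Φ : DNN) (c : ℝ) : (Φ.addOutputConst c).params = Φ.params := rfl

theorem hidden_addOutputConst (Φ : DNN) (c : ℝ) {k : ℕ} (hk : k ≤ Φ.L) :
    (Φ.addOutputConst c).hidden k = Φ.hidden k := by
  induction k with
  | zero => rfl
  | succ k ih =>
    funext x i
    have hk' : k ≠ Φ.L := by omega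
    show max (∑ j, Φ.W k i j * (Φ.addOutputConst c).hidden k x j
      + (Φ.b k i + if k = Φ.L then c else 0)) 0 = _
    rw [ih (by omega), if_neg hk', add_zero]
    rfl

theorem realize_addOutputConst (Φ : DNN) (c : ℝ) (x : Fin (Φ.ℓ 0) → ℝ)
    (i : Fin (Φ.ℓ (Φ.L + 1))) : (Φ.addOutputConst c).realize x i = Φ.realize x i + c := by
  show ∑ j, Φ.W Φ.L i j * (Φ.addOutputConst c).hidden Φ.L x j
    + (Φ.b Φ.L i + if Φ.L = Φ.L then c else 0) = _
  rw [hidden_addOutputConst Φ c le_rfl, if_pos rfl, ← add_assoc]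
  rfl

theorem Realizes.addOutputConst {Φ : DNN} {m n : ℕ} {g : (Fin m → ℝ) → Fin n → ℝ}
    (hΦ : Φ.Realizes g) (c : ℝ) : (Φ.addOutputConst c).Realizes fun x i => g x i + c := by
  obtain ⟨hm, hn, hg⟩ := hΦ
  exact ⟨hm, hn, fun x i =>
    (congrArg (· + c) (hg x i)).trans (realize_addOutputConst Φ c _ _).symm⟩


def appendLayerWidth (Φ : DNN) (k j : ℕ) : ℕ := if j ≤ Φ.L + 1 then Φ.ℓ j else k

theorem appendLayerWidth_of_le (Φ : DNN) (k : ℕ) {j : ℕ} (h : j ≤ Φ.L + 1) :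
    appendLayerWidth Φ k j = Φ.ℓ j := if_pos h

theorem appendLayerWidth_of_lt (Φ : DNN) (k : ℕ) {j : ℕ} (h : Φ.L + 1 < j) :
    appendLayerWidth Φ k j = k := if_neg (by omega)

def appendLayer (Φ : DNN) {k : ℕ} (W : Matrix (Fin k) (Fin (Φ.ℓ (Φ.L + 1))) ℝ)
    (b : Fin k → ℝ) : DNN where
  L := Φ.L + 1
  ℓ := appendLayerWidth Φ k
  W j := Matrix.of fun i i' =>
    if h : j ≤ Φ.L then
      Φ.W j (i.cast (appendLayerWidth_of_le Φ k (by omega)))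
        (i'.cast (appendLayerWidth_of_le Φ k (by omega)))
    else if h' : j = Φ.L + 1 then
      W (i.cast (appendLayerWidth_of_lt Φ k (by omega)))
        (i'.cast (by subst h'; exact appendLayerWidth_of_le Φ k le_rfl))
    else 0
  b j i :=
    if h : j ≤ Φ.L then Φ.b j (i.cast (appendLayerWidth_of_le Φ k (by omega)))
    else b (i.cast (appendLayerWidth_of_lt Φ k (by omega)))

section appendLayer

variable (Φ : DNN) {k : ℕ} (W : Matrix (Fin k) (Fin (Φ.ℓ (Φ.L + 1))) ℝ) (b : Fin k → ℝ)

theorem params_appendLayer :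
    (Φ.appendLayer W b).params = Φ.params + k * (Φ.ℓ (Φ.L + 1) + 1) := by
  show ∑ j ∈ Finset.range (Φ.L + 1 + 1),
    appendLayerWidth Φ k (j + 1) * (appendLayerWidth Φ k j + 1) = _
  rw [Finset.sum_range_succ, appendLayerWidth_of_lt Φ k (by omega),
    appendLayerWidth_of_le Φ k le_rfl, params]
  congr 1
  refine Finset.sum_congr rfl fun j hj => ?_
  rw [Finset.mem_range] at hj
  rw [appendLayerWidth_of_le Φ k (by omega), appendLayerWidth_of_le Φ k (by omega)]

theorem hidden_appendLayer (x : Fin (Φ.ℓ 0) → ℝ) {j : ℕ} (hj : j ≤ Φ.L + 1)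
    (i : Fin (appendLayerWidth Φ k j)) :
    (Φ.appendLayer W b).hidden j (fun l => x (l.cast (appendLayerWidth_of_le Φ k (by omega))))
      i = Φ.hidden j x (i.cast (appendLayerWidth_of_le Φ k hj)) := by
  induction j with
  | zero => rfl
  | succ j ih =>
    have hj' : j ≤ Φ.L := by omega
    show max (∑ l, (Φ.appendLayer W b).W j i l * (Φ.appendLayer W b).hidden j _ l
      + (Φ.appendLayer W b).b j i) 0
      = max (∑ l, Φ.W j (i.cast (appendLayerWidth_of_le Φ k hj)) l * Φ.hidden j x l
      + Φ.b j (i.cast (appendLayerWidth_of_le Φ k hj))) 0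
    congr 2
    · refine Fintype.sum_equiv (finCongr (appendLayerWidth_of_le Φ k (by omega))) _ _ fun l => ?_
      rw [ih (by omega) l]
      simp [appendLayer, dif_pos hj']
    · simp [appendLayer, dif_pos hj']

theorem realize_appendLayer (x : Fin (Φ.ℓ 0) → ℝ) (i : Fin (appendLayerWidth Φ k (Φ.L + 2))) :
    (Φ.appendLayer W b).realize (fun l => x (l.cast (appendLayerWidth_of_le Φ k (by omega)))) i
      = (W *ᵥ fun l => max (Φ.realize x l) 0) (i.cast (appendLayerWidth_of_lt Φ k (by omega)))
        + b (i.cast (appendLayerWidth_of_lt Φ k (by omega))) := by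
  show ∑ l, (Φ.appendLayer W b).W (Φ.L + 1) i l * (Φ.appendLayer W b).hidden (Φ.L + 1) _ l
    + (Φ.appendLayer W b).b (Φ.L + 1) i = _
  congr 1
  · refine Fintype.sum_equiv (finCongr (appendLayerWidth_of_le Φ k le_rfl)) _ _ fun l => ?_
    rw [hidden_appendLayer Φ W b x le_rfl l]
    simp only [appendLayer, Matrix.of_apply, dif_neg (Nat.not_succ_le_self Φ.L), dite_true]
    rfl
  · simp only [appendLayer, dif_neg (Nat.not_succ_le_self Φ.L)]

end appendLayer

theorem Realizes.exists_affine_comp_relu {Φ : DNN} {m n : ℕ} {g : (Fin m → ℝ) → Fin n → ℝ}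
    (hΦ : Φ.Realizes g) {k : ℕ} (W : Matrix (Fin k) (Fin n) ℝ) (b : Fin k → ℝ) :
    ∃ Ψ : DNN, Ψ.Realizes (fun x => W *ᵥ (fun i => max (g x i) 0) + b) ∧
      Ψ.params = Φ.params + k * (n + 1) := by
  obtain ⟨rfl, rfl, hg⟩ := hΦ
  have hg' : g = Φ.realize := funext fun x => funext (hg x)
  subst hg'
  refine ⟨Φ.appendLayer W b, ⟨appendLayerWidth_of_le Φ k (Nat.zero_le _),
    appendLayerWidth_of_lt Φ k (by simp [appendLayer]), fun x i => ?_⟩, params_appendLayer Φ W b⟩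
  exact (realize_appendLayer Φ W b x (i.cast (appendLayerWidth_of_lt Φ k (by omega)).symm)).symm

theorem Realizes.exists_clip {Φ : DNN} {m n : ℕ} {g : (Fin m → ℝ) → Fin n → ℝ}
    (hΦ : Φ.Realizes g) {A B : ℝ} (hAB : A ≤ B) :
    ∃ Ψ : DNN, Ψ.Realizes (fun x i => min (max (g x i) A) B) ∧
      Ψ.params = Φ.params + 2 * (n * (n + 1)) := by
  obtain ⟨Ψ₁, hΨ₁, hparams₁⟩ := (hΦ.addOutputConst (-A)).exists_affine_comp_relu
    (-1 : Matrix (Fin n) (Fin n) ℝ) (fun _ => B - A)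
  obtain ⟨Ψ₂, hΨ₂, hparams₂⟩ :=
    hΨ₁.exists_affine_comp_relu (-1 : Matrix (Fin n) (Fin n) ℝ) (fun _ => B)
  refine ⟨Ψ₂, ?_, by rw [hparams₂, hparams₁, params_addOutputConst]; ring⟩
  convert hΨ₂ using 1
  funext x i
  simp only [Matrix.neg_mulVec, Matrix.one_mulVec, Pi.add_apply, Pi.neg_apply,
    ← sub_eq_add_neg, neg_add_eq_sub, min_max_eq_sub_max_sub_max_sub hAB]

end DNN

theorem cost_clipped_general
    (p : ℝ≥0∞) (m n : ℕ)
    (D : Set (Fin m → ℝ)) (f : (Fin m → ℝ) → (Fin n → ℝ))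
    (L ε : ℝ)
    (hfin : Cost p D f L ε ≠ ⊤)
    (A B : ℝ) (hAB : A < B)
    (hfD : ∀ x ∈ D, f x ∈ cube n A B) :
    ∃ (Φ : DNN) (R : (Fin m → ℝ) → (Fin n → ℝ)),
      Φ.Realizes R ∧
      (∀ x ∈ D, R x ∈ cube n A B) ∧
      (∀ x ∈ D, lpNorm p (R x - f x) ≤ ε) ∧
      (∀ x ∈ D, ∀ y ∈ D, lpNorm p (R x - R y) ≤ L * lpNorm p (x - y)) ∧
      (Φ.params : ℝ≥0∞) ≤ Cost p D f L ε + 2 * n * (n + 1) := by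
  obtain ⟨Φ, g, hΦ, hcost, happrox, hlip⟩ := exists_realizes_params_eq_cost hfin
  obtain ⟨Ψ, hΨ, hparams⟩ := hΦ.exists_clip hAB.le
  refine ⟨Ψ, _, hΨ, fun x _ => ⟨fun i => le_min (le_max_right _ _) hAB.le,
    fun i => min_le_right _ _⟩, fun x hx => ?_, fun x hx y hy => ?_, ?_⟩
  · refine (lpNorm_mono p fun i => ?_).trans (happrox x hx)
    have hfix : min (max (f x i) A) B = f x i := by
      rw [max_eq_left ((hfD x hx).1 i), min_eq_left ((hfD x hx).2 i)]
    simpa only [Pi.sub_apply, hfix] using abs_min_max_sub_min_max_le A B (g x i) (f x i)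
  · exact (lpNorm_mono p fun i => abs_min_max_sub_min_max_le A B _ _).trans (hlip x hx y hy)
  · rw [hparams, hcost]
    exact le_of_eq (by push_cast; ring)

/-- **Lemma 2.5** (clipping the output of an approximating DNN into a hypercube `[A,B]^n`). -/
theorem cost_clipped
    (p : ℝ≥0∞) (hp : 1 ≤ p) (m n : ℕ) (hm : 0 < m) (hn : 0 < n)
    (D : Set (Fin m → ℝ)) (f : (Fin m → ℝ) → (Fin n → ℝ)) (hf : ContinuousOn f D)
    (L ε : ℝ) (hL : 0 ≤ L) (hε : 0 ≤ ε)
    (hfin : Cost p D f L ε ≠ ⊤)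
    (A B : ℝ) (hAB : A < B)
    (hfD : ∀ x ∈ D, f x ∈ cube n A B) :
    ∃ (Φ : DNN) (R : (Fin m → ℝ) → (Fin n → ℝ)),
      Φ.Realizes R ∧
      (∀ x ∈ D, R x ∈ cube n A B) ∧
      (∀ x ∈ D, lpNorm p (R x - f x) ≤ ε) ∧
      (∀ x ∈ D, ∀ y ∈ D, lpNorm p (R x - R y) ≤ L * lpNorm p (x - y)) ∧
      (Φ.params : ℝ≥0∞) ≤ Cost p D f L ε + 2 * n * (n + 1) :=
  cost_clipped_general p m n D f L ε hfin A B hAB hfD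

end
end

section
/- Proposition 2.9 (abstract approximation of compositions of a fixed number of functions with polynomially growing Lipschitz constants): Let c, k ∈ ℕ and p ∈ [1,∞]. For every d ∈ ℕ let 𝔡_1^d, 𝔡_2^d, …, 𝔡_{k+1}^d ∈ {1,…,d^c}; for every d ∈ ℕ and i ∈ {1,…,k} let Q_i^d ⊆ ℝ^{𝔡_i^d} be a 𝔡_i^d-dimensional hypercube and let g_i^d ∈ C(Q_i^d, ℝ^{𝔡_{i+1}^d}). Assume for all d ∈ ℕ, i ∈ {1,…,k}, ε ∈ (0,1] that Cost_p(g_i^d, c·d^c, ε) ≤ c·d^c·ε^{−c}, and assume for all d ∈ ℕ and i ∈ {1,…,k−1} that g_i^d(Q_i^d) ⊆ Q_{i+1}^d. For every d ∈ ℕ let F_d = g_k^d ∘ g_{k−1}^d ∘ ⋯ ∘ g_1^d ∈ C(Q_1^d, ℝ^{𝔡_{k+1}^d}). Then there exists K ∈ ℕ such that for every d ∈ ℕ and ε ∈ (0,1] there exists a DNN Φ with R(Φ) ∈ C(ℝ^{𝔡_1^d}, ℝ^{𝔡_{k+1}^d}), P(Φ) ≤ K·d^K·ε^{−c}, and ‖R(Φ)(x)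 − F_d(x)‖_p ≤ ε for all x ∈ Q_1^d. -/
open scoped BigOperators ENNReal

noncomputable section

/-!
Approximate every `g_i` to accuracy `δ` by a network whose realization is `L`-Lipschitz on
the cube `Q_i`, `L = c d^c`, and chain these networks, clamping coordinatewise to `Q_i` in
front of the `i`-th one (two extra ReLU layers). Since `g_{i-1}` maps into `Q_i` and clamping
moves no point farther from any point of `Q_i`, the errors obey `e_{i+1} ≤ L e_i + δ`, so
`e_k ≤ k L^k δ`. With `δ = ε / ((k + 1) L^k)` the cost bound `c d^c δ^{-c}` of each factor
is still polynomial in `d` times `ε^{-c}`.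
-/

theorem lpNorm_eq_norm_toLp (p : ℝ≥0∞) [Fact (1 ≤ p)] {n : ℕ} (x : Fin n → ℝ) :
    lpNorm p x = ‖WithLp.toLp p x‖ := by
  unfold lpNorm
  split_ifs with hp
  · subst hp
    simp [PiLp.norm_eq_ciSup]
  · have hp0 : 0 < p.toReal := ENNReal.toReal_pos (zero_lt_one.trans_le Fact.out).ne' hp
    simp [PiLp.norm_eq_sum hp0]

theorem lpNorm_zero (p : ℝ≥0∞) [Fact (1 ≤ p)] {n : ℕ} : lpNorm p (0 : Fin n → ℝ) = 0 := by
  simp [lpNorm_eq_norm_toLp]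

theorem lpNorm_add_le (p : ℝ≥0∞) [Fact (1 ≤ p)] {n : ℕ} (x y : Fin n → ℝ) :
    lpNorm p (x + y) ≤ lpNorm p x + lpNorm p y := by
  simpa only [lpNorm_eq_norm_toLp, WithLp.toLp_add] using norm_add_le _ _

theorem lpNorm_le_lpNorm_of_abs_le (p : ℝ≥0∞) {n : ℕ} {x y : Fin n → ℝ}
    (h : ∀ i, |x i| ≤ |y i|) : lpNorm p x ≤ lpNorm p y := by
  unfold lpNorm
  split_ifs
  · cases isEmpty_or_nonempty (Fin n)
    · simp [Real.iSup_of_isEmpty]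
    · exact ciSup_mono (Set.finite_range _).bddAbove h
  · gcongr (∑ i, ?_ ^ _) ^ _ with i
    exact h i

def clampCube (a b : ℝ) {n : ℕ} (y : Fin n → ℝ) : Fin n → ℝ := fun i => max a (min b (y i))

namespace DNN

theorem affine_congr (Φ : DNN) {s t : ℕ} (e : s = t) (v : Fin (Φ.ℓ s) → ℝ)
    (i : Fin (Φ.ℓ (s + 1))) :
    Φ.affine s v i = Φ.affine t (fun j => v (Fin.cast (by rw [e]) j)) (Fin.cast (by rw [e]) i) := by
  subst e; rfl

section comp

variable (Φ₂ Φ₁ : DNN)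

def compDims (k : ℕ) : ℕ := if k ≤ Φ₁.L then Φ₁.ℓ k else Φ₂.ℓ (k - (Φ₁.L + 1))

variable {Φ₁}

theorem compDims_of_le {k : ℕ} (hk : k ≤ Φ₁.L) : compDims Φ₂ Φ₁ k = Φ₁.ℓ k := if_pos hk

theorem compDims_of_gt {k : ℕ} (hk : Φ₁.L < k) :
    compDims Φ₂ Φ₁ k = Φ₂.ℓ (k - (Φ₁.L + 1)) := if_neg hk.not_ge

theorem compDims_succ_of_gt {k : ℕ} (hk : Φ₁.L < k) :
    compDims Φ₂ Φ₁ (k + 1) = Φ₂.ℓ (k - (Φ₁.L + 1) + 1) := by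
  rw [compDims_of_gt Φ₂ (by omega)]
  congr 1
  omega

theorem compDims_add (j : ℕ) : compDims Φ₂ Φ₁ (Φ₁.L + 1 + j) = Φ₂.ℓ j := by
  rw [compDims_of_gt Φ₂ (by omega)]
  congr 1
  omega

variable {Φ₂}

theorem compDims_succ_of_le (h : Φ₁.ℓ (Φ₁.L + 1) = Φ₂.ℓ 0) {k : ℕ} (hk : k ≤ Φ₁.L) :
    compDims Φ₂ Φ₁ (k + 1) = Φ₁.ℓ (k + 1) := by
  rcases hk.lt_or_eq with hk | rfl
  · exact compDims_of_le Φ₂ hk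
  · rw [compDims_of_gt Φ₂ (Nat.lt_succ_self _), Nat.sub_self, h]

variable (Φ₂ Φ₁) in
/-- `R(Φ₂) ∘ 𝔯 ∘ R(Φ₁)`, stacking the layers of `Φ₂` after those of `Φ₁`. -/
def comp (h : Φ₁.ℓ (Φ₁.L + 1) = Φ₂.ℓ 0) : DNN where
  L := Φ₁.L + 1 + Φ₂.L
  ℓ := compDims Φ₂ Φ₁
  W k := if hk : k ≤ Φ₁.L then
      fun i j => Φ₁.W k (Fin.cast (compDims_succ_of_le h hk) i) (Fin.cast (compDims_of_le Φ₂ hk) j)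
    else
      fun i j => Φ₂.W (k - (Φ₁.L + 1)) (Fin.cast (compDims_succ_of_gt Φ₂ (not_le.1 hk)) i)
        (Fin.cast (compDims_of_gt Φ₂ (not_le.1 hk)) j)
  b k := if hk : k ≤ Φ₁.L then
      fun i => Φ₁.b k (Fin.cast (compDims_succ_of_le h hk) i)
    else
      fun i => Φ₂.b (k - (Φ₁.L + 1)) (Fin.cast (compDims_succ_of_gt Φ₂ (not_le.1 hk)) i)

variable (h : Φ₁.ℓ (Φ₁.L + 1) = Φ₂.ℓ 0)

theorem W_comp_of_le {k : ℕ} (hk : k ≤ Φ₁.L) (i : Fin ((comp Φ₂ Φ₁ h).ℓ (k + 1)))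
    (j : Fin ((comp Φ₂ Φ₁ h).ℓ k)) :
    (comp Φ₂ Φ₁ h).W k i j =
      Φ₁.W k (Fin.cast (compDims_succ_of_le h hk) i) (Fin.cast (compDims_of_le Φ₂ hk) j) :=
  congrFun (congrFun (dif_pos hk : (comp Φ₂ Φ₁ h).W k = _) i) j

theorem b_comp_of_le {k : ℕ} (hk : k ≤ Φ₁.L) (i : Fin ((comp Φ₂ Φ₁ h).ℓ (k + 1))) :
    (comp Φ₂ Φ₁ h).b k i = Φ₁.b k (Fin.cast (compDims_succ_of_le h hk) i) := by
  simp only [comp, dif_pos hk]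

theorem W_comp_of_gt {k : ℕ} (hk : Φ₁.L < k) (i : Fin ((comp Φ₂ Φ₁ h).ℓ (k + 1)))
    (j : Fin ((comp Φ₂ Φ₁ h).ℓ k)) :
    (comp Φ₂ Φ₁ h).W k i j = Φ₂.W (k - (Φ₁.L + 1)) (Fin.cast (compDims_succ_of_gt Φ₂ hk) i)
      (Fin.cast (compDims_of_gt Φ₂ hk) j) :=
  congrFun (congrFun (dif_neg hk.not_ge : (comp Φ₂ Φ₁ h).W k = _) i) j

theorem b_comp_of_gt {k : ℕ} (hk : Φ₁.L < k) (i : Fin ((comp Φ₂ Φ₁ h).ℓ (k + 1))) :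
    (comp Φ₂ Φ₁ h).b k i = Φ₂.b (k - (Φ₁.L + 1)) (Fin.cast (compDims_succ_of_gt Φ₂ hk) i) := by
  simp only [comp, dif_neg hk.not_ge]

theorem affine_comp_of_le {k : ℕ} (hk : k ≤ Φ₁.L) (v : Fin ((comp Φ₂ Φ₁ h).ℓ k) → ℝ)
    (i : Fin ((comp Φ₂ Φ₁ h).ℓ (k + 1))) :
    (comp Φ₂ Φ₁ h).affine k v i =
      Φ₁.affine k (fun j => v (Fin.cast (compDims_of_le Φ₂ hk).symm j))
        (Fin.cast (compDims_succ_of_le h hk) i) := by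
  simp only [affine, W_comp_of_le h hk, b_comp_of_le h hk]
  rw [← Fin.sum_congr' _ (compDims_of_le Φ₂ hk)]
  rfl

theorem affine_comp_of_gt {k : ℕ} (hk : Φ₁.L < k) (v : Fin ((comp Φ₂ Φ₁ h).ℓ k) → ℝ)
    (i : Fin ((comp Φ₂ Φ₁ h).ℓ (k + 1))) :
    (comp Φ₂ Φ₁ h).affine k v i =
      Φ₂.affine (k - (Φ₁.L + 1)) (fun j => v (Fin.cast (compDims_of_gt Φ₂ hk).symm j))
        (Fin.cast (compDims_succ_of_gt Φ₂ hk) i) := by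
  simp only [affine, W_comp_of_gt h hk, b_comp_of_gt h hk]
  rw [← Fin.sum_congr' _ (compDims_of_gt Φ₂ hk)]
  rfl

theorem hidden_comp_of_le (x : Fin ((comp Φ₂ Φ₁ h).ℓ 0) → ℝ) {k : ℕ} (hk : k ≤ Φ₁.L)
    (i : Fin ((comp Φ₂ Φ₁ h).ℓ k)) :
    (comp Φ₂ Φ₁ h).hidden k x i =
      Φ₁.hidden k (fun j => x (Fin.cast (compDims_of_le Φ₂ (Nat.zero_le _)).symm j))
        (Fin.cast (compDims_of_le Φ₂ hk) i) := by
  induction k with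
  | zero => rfl
  | succ k ih =>
    simp only [hidden]
    rw [affine_comp_of_le h (by omega)]
    simp only [ih (by omega)]
    rfl

theorem hidden_comp_add (x : Fin ((comp Φ₂ Φ₁ h).ℓ 0) → ℝ) (j : ℕ)
    (i : Fin ((comp Φ₂ Φ₁ h).ℓ (Φ₁.L + 1 + j))) :
    (comp Φ₂ Φ₁ h).hidden (Φ₁.L + 1 + j) x i =
      Φ₂.hidden j (fun t => max (Φ₁.realize
          (fun l => x (Fin.cast (compDims_of_le Φ₂ (Nat.zero_le _)).symm l)) (Fin.cast h.symm t)) 0)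
        (Fin.cast (compDims_add Φ₂ j) i) := by
  induction j with
  | zero =>
    show max _ 0 = max _ 0
    rw [affine_comp_of_le h le_rfl]
    simp only [hidden_comp_of_le h x le_rfl]
    rfl
  | succ j ih =>
    show max ((comp Φ₂ Φ₁ h).affine (Φ₁.L + 1 + j) ((comp Φ₂ Φ₁ h).hidden (Φ₁.L + 1 + j) x) i) 0
      = _
    rw [affine_comp_of_gt h (by omega), affine_congr Φ₂ (by omega : Φ₁.L + 1 + j - (Φ₁.L + 1) = j)]
    simp only [ih]
    rfl

theorem realize_comp (x : Fin ((comp Φ₂ Φ₁ h).ℓ 0) → ℝ)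
    (i : Fin ((comp Φ₂ Φ₁ h).ℓ ((comp Φ₂ Φ₁ h).L + 1))) :
    (comp Φ₂ Φ₁ h).realize x i =
      Φ₂.realize (fun t => max (Φ₁.realize
          (fun l => x (Fin.cast (compDims_of_le Φ₂ (Nat.zero_le _)).symm l)) (Fin.cast h.symm t)) 0)
        (Fin.cast (compDims_add Φ₂ (Φ₂.L + 1)) i) := by
  refine (affine_comp_of_gt h (k := Φ₁.L + 1 + Φ₂.L) (by omega) _ i).trans ?_
  rw [affine_congr Φ₂ (by omega : Φ₁.L + 1 + Φ₂.L - (Φ₁.L + 1) = Φ₂.L)]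
  exact congrArg₂ _ (funext fun t => hidden_comp_add h x Φ₂.L _) rfl

theorem params_comp : (comp Φ₂ Φ₁ h).params = Φ₁.params + Φ₂.params := by
  rw [params, show (comp Φ₂ Φ₁ h).L + 1 = (Φ₁.L + 1) + (Φ₂.L + 1) by simp only [comp]; omega,
    Finset.sum_range_add]
  congr 1
  · refine Finset.sum_congr rfl fun k hk => ?_
    have hk : k ≤ Φ₁.L := Nat.lt_succ_iff.1 (Finset.mem_range.1 hk)
    simp only [comp, compDims_succ_of_le h hk, compDims_of_le Φ₂ hk]
  · refine Finset.sum_congr rfl fun j _ => ?_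
    show compDims Φ₂ Φ₁ (Φ₁.L + 1 + (j + 1)) * (compDims Φ₂ Φ₁ (Φ₁.L + 1 + j) + 1) = _
    rw [compDims_add, compDims_add]

end comp

theorem Realizes.comp {m n q : ℕ} {Φ₁ Φ₂ : DNN} {f₁ : (Fin m → ℝ) → Fin n → ℝ}
    {f₂ : (Fin n → ℝ) → Fin q → ℝ} (h₁ : Φ₁.Realizes f₁) (h₂ : Φ₂.Realizes f₂) :
    ∃ Ψ : DNN, Ψ.Realizes (fun x => f₂ fun i => max (f₁ x i) 0) ∧
      Ψ.params = Φ₁.params + Φ₂.params := by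
  obtain ⟨hm₁, hn₁, hf₁⟩ := h₁
  obtain ⟨hm₂, hn₂, hf₂⟩ := h₂
  have h : Φ₁.ℓ (Φ₁.L + 1) = Φ₂.ℓ 0 := hn₁.trans hm₂.symm
  refine ⟨DNN.comp Φ₂ Φ₁ h, ⟨(compDims_of_le Φ₂ (Nat.zero_le _)).trans hm₁,
    (compDims_add Φ₂ (Φ₂.L + 1)).trans hn₂, fun x i => ?_⟩, params_comp h⟩
  show f₂ (fun i => max (f₁ x i) 0) i = _
  rw [realize_comp, hf₂]
  congr 2
  funext t
  rw [hf₁]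
  rfl

def identity (n : ℕ) : DNN := ⟨0, fun _ => n, fun _ => 1, fun _ => 0⟩

theorem params_identity (n : ℕ) : (identity n).params = n * (n + 1) := by
  simp [params, identity]

theorem realizes_identity (n : ℕ) : (identity n).Realizes (id : (Fin n → ℝ) → Fin n → ℝ) :=
  ⟨rfl, rfl, fun x i => by
    show x i = ∑ j, (1 : Matrix (Fin n) (Fin n) ℝ) i j * x j + 0
    simp [Matrix.one_apply]⟩

def affineOutput (Φ : DNN) (α s : ℝ) : DNN where
  L := Φ.L
  ℓ := Φ.ℓ
  W k i j := if k = Φ.L then α * Φ.W k i j else Φ.W k i j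
  b k i := if k = Φ.L then α * Φ.b k i + s else Φ.b k i

section affineOutput

variable (Φ : DNN) (α s : ℝ)

theorem affine_affineOutput_of_ne {k : ℕ} (hk : k ≠ Φ.L) :
    (Φ.affineOutput α s).affine k = Φ.affine k := by
  funext v i
  simp only [affine, affineOutput, if_neg hk]
  rfl

theorem affine_affineOutput_self (v : Fin (Φ.ℓ Φ.L) → ℝ) (i : Fin (Φ.ℓ (Φ.L + 1))) :
    (Φ.affineOutput α s).affine Φ.L v i = α * Φ.affine Φ.L v i + s := by
  simp only [affine, affineOutput, if_pos, mul_add, Finset.mul_sum, mul_assoc, add_assoc]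
  rfl

theorem hidden_affineOutput (x : Fin (Φ.ℓ 0) → ℝ) {k : ℕ} (hk : k ≤ Φ.L) :
    (Φ.affineOutput α s).hidden k x = Φ.hidden k x := by
  induction k with
  | zero => rfl
  | succ k ih =>
    funext i
    show max ((Φ.affineOutput α s).affine k _ i) 0 = max (Φ.affine k _ i) 0
    rw [ih (by omega), affine_affineOutput_of_ne Φ α s (by omega)]

theorem realize_affineOutput (x : Fin (Φ.ℓ 0) → ℝ) (i : Fin (Φ.ℓ (Φ.L + 1))) :
    (Φ.affineOutput α s).realize x i = α * Φ.realize x i + s := by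
  show (Φ.affineOutput α s).affine Φ.L ((Φ.affineOutput α s).hidden Φ.L x) i = _
  rw [hidden_affineOutput Φ α s x le_rfl]
  exact affine_affineOutput_self Φ α s _ i

end affineOutput

theorem Realizes.affineOutput {m n : ℕ} {Φ : DNN} {f : (Fin m → ℝ) → Fin n → ℝ}
    (hf : Φ.Realizes f) (α s : ℝ) :
    (Φ.affineOutput α s).Realizes (fun x i => α * f x i + s) := by
  obtain ⟨hm, hn, hf⟩ := hf
  refine ⟨hm, hn, fun x i => ?_⟩
  show α * f x i + s = _
  rw [hf]
  exact (realize_affineOutput Φ α s _ _).symm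

def shiftInput (Φ : DNN) (s : ℝ) : DNN where
  L := Φ.L
  ℓ := Φ.ℓ
  W := Φ.W
  b k i := if k = 0 then Φ.b k i + (∑ j, Φ.W k i j) * s else Φ.b k i

section shiftInput

variable (Φ : DNN) (s : ℝ)

theorem affine_shiftInput_zero (v : Fin (Φ.ℓ 0) → ℝ) :
    (Φ.shiftInput s).affine 0 v = Φ.affine 0 fun j => v j + s := by
  funext i
  show ∑ j, Φ.W 0 i j * v j + (Φ.b 0 i + (∑ j, Φ.W 0 i j) * s) =
    ∑ j, Φ.W 0 i j * (v j + s) + Φ.b 0 i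
  simp only [mul_add, Finset.sum_add_distrib, Finset.sum_mul]
  ring

theorem affine_shiftInput_succ (k : ℕ) : (Φ.shiftInput s).affine (k + 1) = Φ.affine (k + 1) := by
  funext v i
  simp only [affine, shiftInput, if_neg (Nat.succ_ne_zero k)]
  rfl

theorem affine_hidden_shiftInput (x : Fin (Φ.ℓ 0) → ℝ) (k : ℕ) :
    (Φ.shiftInput s).affine k ((Φ.shiftInput s).hidden k x) =
      Φ.affine k (Φ.hidden k fun j => x j + s) := by
  induction k with
  | zero => exact affine_shiftInput_zero Φ s x
  | succ k ih =>
    rw [affine_shiftInput_succ]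
    congr 1
    funext i
    show max ((Φ.shiftInput s).affine k _ i) 0 = max (Φ.affine k _ i) 0
    rw [ih]

end shiftInput

theorem Realizes.shiftInput {m n : ℕ} {Φ : DNN} {f : (Fin m → ℝ) → Fin n → ℝ}
    (hf : Φ.Realizes f) (s : ℝ) :
    (Φ.shiftInput s).Realizes (fun x => f fun j => x j + s) := by
  obtain ⟨hm, hn, hf⟩ := hf
  refine ⟨hm, hn, fun x i => ?_⟩
  show f _ i = _
  rw [hf]
  exact congrFun (affine_hidden_shiftInput Φ s _ Φ.L).symm _

theorem params_affineOutput (Φ : DNN) (α s : ℝ) : (Φ.affineOutput α s).params = Φ.params := rfl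

theorem params_shiftInput (Φ : DNN) (s : ℝ) : (Φ.shiftInput s).params = Φ.params := rfl

/-- `max a (min b t) = a + 𝔯((b - a) - 𝔯(b - t))`. -/
theorem exists_realizes_comp_clampCube {m n q : ℕ} {Φ₁ Φ₂ : DNN} {f₁ : (Fin m → ℝ) → Fin n → ℝ}
    {f₂ : (Fin n → ℝ) → Fin q → ℝ} (h₁ : Φ₁.Realizes f₁) (h₂ : Φ₂.Realizes f₂) (a b : ℝ) :
    ∃ Ψ : DNN, Ψ.Realizes (fun x => f₂ (clampCube a b (f₁ x))) ∧
      Ψ.params = Φ₁.params + n * (n + 1) + Φ₂.params := by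
  obtain ⟨Ψ₁, hΨ₁, hP₁⟩ :=
    (h₁.affineOutput (-1) b).comp ((realizes_identity n).affineOutput (-1) (b - a))
  obtain ⟨Ψ, hΨ, hP⟩ := hΨ₁.comp (h₂.shiftInput a)
  have hclamp (t : ℝ) : max (-1 * max (-1 * t + b) 0 + (b - a)) 0 + a = max a (min b t) := by
    simp only [max_def, min_def]
    split_ifs <;> linarith
  refine ⟨Ψ, ?_, ?_⟩
  · convert hΨ using 3 with x
    funext i
    exact (hclamp _).symm
  · rw [hP, hP₁, params_shiftInput, params_affineOutput, params_affineOutput, params_identity]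

end DNN

theorem lpNorm_clampCube_sub_le (p : ℝ≥0∞) {n : ℕ} {a b : ℝ} {z : Fin n → ℝ}
    (hz : z ∈ cube n a b) (y : Fin n → ℝ) :
    lpNorm p (clampCube a b y - z) ≤ lpNorm p (y - z) := by
  refine lpNorm_le_lpNorm_of_abs_le p fun i => ?_
  have hzi : z i ∈ Set.Icc a b := ⟨hz.1 i, hz.2 i⟩
  have h := Set.abs_projIcc_sub_projIcc (hzi.1.trans hzi.2) (c := y i) (d := z i)
  rwa [Set.projIcc_of_mem _ hzi, Set.coe_projIcc] at h

/-- `Cost p D f L ε` is the least number of parameters of a `Φ` with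
`Φ.IsLipApprox p D f L ε`. -/
def DNN.IsLipApprox (Φ : DNN) (p : ℝ≥0∞) {m n : ℕ} (D : Set (Fin m → ℝ))
    (f : (Fin m → ℝ) → Fin n → ℝ) (L ε : ℝ) : Prop :=
  ∃ R : (Fin m → ℝ) → Fin n → ℝ, Φ.Realizes R ∧ (∀ x ∈ D, lpNorm p (R x - f x) ≤ ε) ∧
    ∀ x ∈ D, ∀ y ∈ D, lpNorm p (R x - R y) ≤ L * lpNorm p (x - y)

theorem exists_isLipApprox_of_cost_le {p : ℝ≥0∞} {m n : ℕ} {D : Set (Fin m → ℝ)}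
    {f : (Fin m → ℝ) → Fin n → ℝ} {L ε B : ℝ} (hB : 0 ≤ B)
    (h : Cost p D f L ε ≤ ENNReal.ofReal B) :
    ∃ Φ : DNN, Φ.IsLipApprox p D f L ε ∧ (Φ.params : ℝ) ≤ B + 1 := by
  have hlt : Cost p D f L ε < ENNReal.ofReal (B + 1) := by
    rw [ENNReal.ofReal_add hB zero_le_one, ENNReal.ofReal_one]
    exact h.trans_lt (ENNReal.lt_add_right ENNReal.ofReal_ne_top one_ne_zero)
  obtain ⟨_, ⟨Φ, R, hR, rfl, happrox, hlip⟩, hΦ⟩ := sInf_lt_iff.1 hlt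
  exact ⟨Φ, ⟨R, hR, happrox, hlip⟩, (ENNReal.natCast_lt_ofReal.1 hΦ).le⟩

/-- Clamping keeps the input of `R` in the cube, where its Lipschitz bound holds. -/
theorem lpNorm_comp_clampCube_sub_le {p : ℝ≥0∞} [Fact (1 ≤ p)] {n q : ℕ} {a b L δ e : ℝ}
    (hL : 0 ≤ L) {R g : (Fin n → ℝ) → Fin q → ℝ}
    (happrox : ∀ x ∈ cube n a b, lpNorm p (R x - g x) ≤ δ)
    (hlip : ∀ x ∈ cube n a b, ∀ y ∈ cube n a b, lpNorm p (R x - R y) ≤ L * lpNorm p (x - y))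
    {y z : Fin n → ℝ} (hz : z ∈ cube n a b) (hy : lpNorm p (y - z) ≤ e) :
    lpNorm p (R (clampCube a b y) - g z) ≤ L * e + δ := by
  have hclamp : clampCube a b y ∈ cube n a b :=
    ⟨fun i => le_max_left _ _, fun i => max_le ((hz.1 i).trans (hz.2 i)) (min_le_left _ _)⟩
  calc lpNorm p (R (clampCube a b y) - g z)
      = lpNorm p ((R (clampCube a b y) - R z) + (R z - g z)) := by rw [sub_add_sub_cancel]
    _ ≤ lpNorm p (R (clampCube a b y) - R z) + lpNorm p (R z - g z) := lpNorm_add_le p _ _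
    _ ≤ L * lpNorm p (clampCube a b y - z) + δ := add_le_add (hlip _ hclamp _ hz) (happrox _ hz)
    _ ≤ L * e + δ := by
      gcongr
      exact (lpNorm_clampCube_sub_le p hz y).trans hy

theorem compSeq_mem_cube {dims : ℕ → ℕ} {a b : ℕ → ℝ}
    {g : ∀ i, (Fin (dims i) → ℝ) → Fin (dims (i + 1)) → ℝ} {k : ℕ}
    (hmap : ∀ i, i + 1 < k → ∀ x ∈ cube (dims i) (a i) (b i),
      g i x ∈ cube (dims (i + 1)) (a (i + 1)) (b (i + 1)))
    {x : Fin (dims 0) → ℝ} (hx : x ∈ cube (dims 0) (a 0) (b 0)) :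
    ∀ j < k, compSeq dims g j x ∈ cube (dims j) (a j) (b j)
  | 0, _ => hx
  | j + 1, hj => hmap j hj _ (compSeq_mem_cube hmap hx j (by omega))

theorem exists_dnn_approx_compSeq {p : ℝ≥0∞} [Fact (1 ≤ p)] {dims : ℕ → ℕ} {a b : ℕ → ℝ}
    {g : ∀ i, (Fin (dims i) → ℝ) → Fin (dims (i + 1)) → ℝ} {k N : ℕ} {L δ B : ℝ} (hL : 0 ≤ L)
    (hdims : ∀ i ≤ k, dims i ≤ N)
    (hmap : ∀ i, i + 1 < k → ∀ x ∈ cube (dims i) (a i) (b i),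
      g i x ∈ cube (dims (i + 1)) (a (i + 1)) (b (i + 1)))
    (happrox : ∀ i < k, ∃ Φ : DNN,
      Φ.IsLipApprox p (cube (dims i) (a i) (b i)) (g i) L δ ∧ (Φ.params : ℝ) ≤ B) :
    ∃ (Ψ : DNN) (G : (Fin (dims 0) → ℝ) → Fin (dims k) → ℝ), Ψ.Realizes G ∧
      (Ψ.params : ℝ) ≤ (k + 1) * (N * (N + 1)) + k * B ∧
      ∀ x ∈ cube (dims 0) (a 0) (b 0),
        lpNorm p (G x - compSeq dims g k x) ≤ δ * ∑ i ∈ Finset.range k, L ^ i := by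
  suffices ∀ j ≤ k, ∃ (Ψ : DNN) (G : (Fin (dims 0) → ℝ) → Fin (dims j) → ℝ), Ψ.Realizes G ∧
      (Ψ.params : ℝ) ≤ (j + 1) * (N * (N + 1)) + j * B ∧
      ∀ x ∈ cube (dims 0) (a 0) (b 0),
        lpNorm p (G x - compSeq dims g j x) ≤ δ * ∑ i ∈ Finset.range j, L ^ i from this k le_rfl
  intro j hj
  have hN : ∀ i ≤ k, ((dims i * (dims i + 1) : ℕ) : ℝ) ≤ N * (N + 1) := fun i hi => by
    exact_mod_cast Nat.mul_le_mul (hdims i hi) (Nat.succ_le_succ (hdims i hi))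
  induction j with
  | zero =>
    refine ⟨DNN.identity (dims 0), id, DNN.realizes_identity _, ?_, fun x _ => ?_⟩
    · simpa [DNN.params_identity] using hN 0 (Nat.zero_le _)
    · simp [compSeq, lpNorm_zero]
  | succ j ih =>
    obtain ⟨Ψ, G, hG, hΨ, herr⟩ := ih (by omega)
    obtain ⟨Φ, ⟨R, hR, hRapprox, hRlip⟩, hΦ⟩ := happrox j hj
    obtain ⟨Ψ', hΨ', hP'⟩ := DNN.exists_realizes_comp_clampCube hG hR (a j) (b j)
    refine ⟨Ψ', _, hΨ', ?_, fun x hx => ?_⟩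
    · have := hN j (by omega)
      rw [hP']
      push_cast at this ⊢
      linarith
    · calc lpNorm p (R (clampCube (a j) (b j) (G x)) - compSeq dims g (j + 1) x)
          ≤ L * (δ * ∑ i ∈ Finset.range j, L ^ i) + δ :=
            lpNorm_comp_clampCube_sub_le hL hRapprox hRlip
              (compSeq_mem_cube hmap hx j hj) (herr x hx)
        _ = δ * ∑ i ∈ Finset.range (j + 1), L ^ i := by rw [geom_sum_succ]; ring

theorem geom_sum_le_mul_pow {x : ℝ} (hx : 1 ≤ x) (n : ℕ) :
    ∑ i ∈ Finset.range n, x ^ i ≤ n * x ^ n := by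
  calc ∑ i ∈ Finset.range n, x ^ i ≤ ∑ _i ∈ Finset.range n, x ^ n :=
        Finset.sum_le_sum fun i hi => pow_le_pow_right₀ hx (Finset.mem_range.1 hi).le
    _ = n * x ^ n := by simp

theorem composition_params_le_pow {c k : ℕ} {D e : ℝ} (hc : 1 ≤ c) (hD : 1 ≤ D) (he : 1 ≤ e) :
    (k + 1) * (D * (D + 1)) + k * (c * D * (((k + 1) * (c * D) ^ k) ^ c * e) + 1) ≤
      4 * ((k + 1) * (c * D)) ^ ((k + 1) * c + 3) * e := by
  set X : ℝ := (k + 1) * (c * D)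
  have hc' : (1 : ℝ) ≤ c := by exact_mod_cast hc
  have hcD1 : 1 ≤ (c : ℝ) * D := one_le_mul_of_one_le_of_one_le hc' hD
  have hk1 : (1 : ℝ) ≤ k + 1 := by linarith [k.cast_nonneg (α := ℝ)]
  have hk : (k : ℝ) + 1 ≤ X := le_mul_of_one_le_right (by positivity) hcD1
  have hcD : (c : ℝ) * D ≤ X := le_mul_of_one_le_left (by positivity) hk1
  have hDX : D ≤ X := (le_mul_of_one_le_left (by linarith) hc').trans hcD
  have hX1 : 1 ≤ X := hD.trans hDX
  have hY : ((k + 1) * (c * D) ^ k) ^ c ≤ X ^ ((k + 1) * c) := by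
    rw [pow_mul, pow_succ']
    gcongr
  set Y := X ^ ((k + 1) * c)
  have hY1 : 1 ≤ Y * e := one_le_mul_of_one_le_of_one_le (one_le_pow₀ hX1) he
  have h1 : (k + 1) * (D * (D + 1)) ≤ X * (X * (X + X)) := by gcongr
  have h2 : k * (c * D * (((k + 1) * (c * D) ^ k) ^ c * e) + 1) ≤ X * (X * (Y * e) + Y * e) := by
    gcongr
    linarith
  have hX2 : X ≤ X ^ 2 := by nlinarith
  have hX3 : X ^ 2 ≤ X ^ 3 := by nlinarith
  rw [pow_add]
  nlinarith [mul_le_mul_of_nonneg_left hY1 (by positivity : (0 : ℝ) ≤ X ^ 3),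
    mul_le_mul_of_nonneg_right hX2 (by positivity : (0 : ℝ) ≤ Y * e),
    mul_le_mul_of_nonneg_right hX3 (by positivity : (0 : ℝ) ≤ Y * e)]

theorem div_mul_geom_sum_le {x ε : ℝ} (hx : 1 ≤ x) (hε : 0 ≤ ε) (n : ℕ) :
    ε / ((n + 1) * x ^ n) * ∑ i ∈ Finset.range n, x ^ i ≤ ε := by
  rw [div_mul_eq_mul_div, div_le_iff₀ (by positivity)]
  exact mul_le_mul_of_nonneg_left ((geom_sum_le_mul_pow hx n).trans (by gcongr; linarith)) hε

def compositionExponent (c k : ℕ) : ℕ :=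
  4 * ((k + 1) * c) ^ ((k + 1) * c + 3) + c * ((k + 1) * c + 3)

theorem composition_params_le {c k d : ℕ} (hc : 0 < c) (hd : 0 < d) {ε : ℝ} (hε : 0 < ε)
    (hε1 : ε ≤ 1) :
    (k + 1) * (((d ^ c : ℕ) : ℝ) * ((d ^ c : ℕ) + 1)) +
        k * (c * (d : ℝ) ^ c * (ε / ((k + 1) * (c * (d : ℝ) ^ c) ^ k)) ^ (-(c : ℤ)) + 1) ≤
      compositionExponent c k * (d : ℝ) ^ compositionExponent c k * ε ^ (-(c : ℤ)) := by
  have hD : (1 : ℝ) ≤ (d : ℝ) ^ c := one_le_pow₀ (by exact_mod_cast hd)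
  have he : 1 ≤ ε ^ (-(c : ℤ)) := one_le_zpow_of_nonpos₀ hε hε1 (by omega)
  rw [div_eq_mul_inv, mul_zpow, inv_zpow', neg_neg, zpow_natCast, mul_comm (ε ^ _)]
  push_cast
  calc _ ≤ 4 * ((k + 1) * (c * (d : ℝ) ^ c)) ^ ((k + 1) * c + 3) * ε ^ (-(c : ℤ)) :=
        composition_params_le_pow hc hD he
    _ = 4 * ((k + 1) * c) ^ ((k + 1) * c + 3) * (d : ℝ) ^ (c * ((k + 1) * c + 3)) *
          ε ^ (-(c : ℤ)) := by
        rw [← mul_assoc, mul_pow, ← pow_mul]; ring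
    _ ≤ compositionExponent c k * (d : ℝ) ^ compositionExponent c k * ε ^ (-(c : ℤ)) := by
        unfold compositionExponent
        push_cast
        gcongr
        · exact le_add_of_nonneg_right (by positivity)
        · exact_mod_cast hd
        · exact Nat.le_add_left _ _

theorem abstract_composition_approx_fixed_number_general
    (c k : ℕ) (hc : 0 < c) (p : ℝ≥0∞) (hp : 1 ≤ p)
    (dims : ℕ → ℕ → ℕ) (a b : ℕ → ℕ → ℝ)
    (g : ∀ d i : ℕ, (Fin (dims d i) → ℝ) → (Fin (dims d (i + 1)) → ℝ))
    (hdims : ∀ d, 0 < d → ∀ i ≤ k, 1 ≤ dims d i ∧ dims d i ≤ d ^ c)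
    (hcost : ∀ d, 0 < d → ∀ i < k, ∀ ε : ℝ, 0 < ε → ε ≤ 1 →
      Cost p (cube (dims d i) (a d i) (b d i)) (g d i) ((c : ℝ) * (d : ℝ) ^ c) ε ≤
        ENNReal.ofReal ((c : ℝ) * (d : ℝ) ^ c * ε ^ (-(c : ℤ))))
    (hmap : ∀ d, 0 < d → ∀ i, i + 1 < k → ∀ x ∈ cube (dims d i) (a d i) (b d i),
      g d i x ∈ cube (dims d (i + 1)) (a d (i + 1)) (b d (i + 1))) :
    ∃ K : ℕ, 0 < K ∧ ∀ d, 0 < d → ∀ ε : ℝ, 0 < ε → ε ≤ 1 →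
      ∃ (Φ : DNN) (R : (Fin (dims d 0) → ℝ) → (Fin (dims d k) → ℝ)),
        Φ.Realizes R ∧
        (Φ.params : ℝ) ≤ (K : ℝ) * (d : ℝ) ^ K * ε ^ (-(c : ℤ)) ∧
        ∀ x ∈ cube (dims d 0) (a d 0) (b d 0),
          lpNorm p (R x - compSeq (dims d) (g d) k x) ≤ ε := by
  have : Fact (1 ≤ p) := ⟨hp⟩
  refine ⟨compositionExponent c k, by unfold compositionExponent; positivity,
    fun d hd ε hε hε1 => ?_⟩
  have hL : (1 : ℝ) ≤ c * (d : ℝ) ^ c :=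
    one_le_mul_of_one_le_of_one_le (by exact_mod_cast hc) (one_le_pow₀ (by exact_mod_cast hd))
  set M : ℝ := (k + 1) * (c * (d : ℝ) ^ c) ^ k
  have hM : 1 ≤ M := one_le_mul_of_one_le_of_one_le (by simp) (one_le_pow₀ hL)
  have hδ : 0 < ε / M := by positivity
  obtain ⟨Ψ, G, hG, hP, herr⟩ := exists_dnn_approx_compSeq (N := d ^ c) (by positivity)
    (fun i hi => (hdims d hd i hi).2) (hmap d hd) fun i hi =>
      exists_isLipApprox_of_cost_le (by positivity)
        (hcost d hd i hi _ hδ (div_le_one_of_le₀ (hε1.trans hM) (by positivity)))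
  exact ⟨Ψ, G, hG, hP.trans (composition_params_le hc hd hε hε1),
    fun x hx => (herr x hx).trans (div_mul_geom_sum_le hL hε.le k)⟩

/-- **Proposition 2.9**: abstract DNN approximation of compositions of a fixed number `k`
of functions, each approximable with Lipschitz constant `c d^c` at cost `≤ c d^c ε⁻ᶜ`. -/
theorem abstract_composition_approx_fixed_number
    (c k : ℕ) (hc : 0 < c) (hk : 0 < k) (p : ℝ≥0∞) (hp : 1 ≤ p)
    (dims : ℕ → ℕ → ℕ) (a b : ℕ → ℕ → ℝ)
    (g : ∀ d i : ℕ, (Fin (dims d i) → ℝ) → (Fin (dims d (i + 1)) → ℝ))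
    (hdims : ∀ d, 0 < d → ∀ i ≤ k, 1 ≤ dims d i ∧ dims d i ≤ d ^ c)
    (hab : ∀ d, 0 < d → ∀ i < k, a d i < b d i)
    (hcont : ∀ d, 0 < d → ∀ i < k,
      ContinuousOn (g d i) (cube (dims d i) (a d i) (b d i)))
    (hcost : ∀ d, 0 < d → ∀ i < k, ∀ ε : ℝ, 0 < ε → ε ≤ 1 →
      Cost p (cube (dims d i) (a d i) (b d i)) (g d i) ((c : ℝ) * (d : ℝ) ^ c) ε ≤
        ENNReal.ofReal ((c : ℝ) * (d : ℝ) ^ c * ε ^ (-(c : ℤ))))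
    (hmap : ∀ d, 0 < d → ∀ i, i + 1 < k → ∀ x ∈ cube (dims d i) (a d i) (b d i),
      g d i x ∈ cube (dims d (i + 1)) (a d (i + 1)) (b d (i + 1))) :
    ∃ K : ℕ, 0 < K ∧ ∀ d, 0 < d → ∀ ε : ℝ, 0 < ε → ε ≤ 1 →
      ∃ (Φ : DNN) (R : (Fin (dims d 0) → ℝ) → (Fin (dims d k) → ℝ)),
        Φ.Realizes R ∧
        (Φ.params : ℝ) ≤ (K : ℝ) * (d : ℝ) ^ K * ε ^ (-(c : ℤ)) ∧
        ∀ x ∈ cube (dims d 0) (a d 0) (b d 0),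
          lpNorm p (R x - compSeq (dims d) (g d) k x) ≤ ε :=
  abstract_composition_approx_fixed_number_general c k hc p hp dims a b g hdims hcost hmap

end
end
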